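/- Let (A,{·,·},μ,α,β) be a BiHom-Poisson algebra, let D be an (α^k,β^l)-derivation of A and D' an (α^{k'},β^{l'})-derivation of A. Then their commutator [D,D'] = D∘D' − D'∘D is an (α^{k+k'},β^{l+l'})-derivation of A. -/
import Mathlib


/-- A BiHom-Poisson algebra structure on a `K`-vector space `A` (K a field of
characteristic 0), given by bilinear maps `br` (the bracket `{·,·}`) and
`mul` (the product `μ`) and commuting linear maps `α`, `β` that are
multiplicative with respect to both operations. -/
structure IsBiHomPoisson {K A : Type*} [Field K] [CharZero K]
    [AddCommGroup A] [Module K A]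
    (br mul : A →ₗ[K] A →ₗ[K] A) (α β : A →ₗ[K] A) : Prop where
  comm_maps : ∀ x, α (β x) = β (α x)
  map_mul_alpha : ∀ x y, α (mul x y) = mul (α x) (α y)
  map_mul_beta : ∀ x y, β (mul x y) = mul (β x) (β y)
  map_br_alpha : ∀ x y, α (br x y) = br (α x) (α y)
  map_br_beta : ∀ x y, β (br x y) = br (β x) (β y)
  assoc : ∀ x y z, mul (mul x y) (β z) = mul (α x) (mul y z)
  mul_comm : ∀ x y, mul (β x) (α y) = mul (β y) (α x)
  skew : ∀ x y, br (β x) (α y) = - br (β y) (α x)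
  jacobi : ∀ x y z,
    br (β (β x)) (br (β y) (α z)) + br (β (β y)) (br (β z) (α x))
      + br (β (β z)) (br (β x) (α y)) = 0
  leibniz : ∀ x y z,
    br (α (β x)) (mul y z) = mul (br (β x) y) (β z) + mul (β y) (br (α x) z)

/-- An `(α^k, β^l)`-derivation of a BiHom-Poisson algebra. -/
def IsBHDerivation {K A : Type*} [Field K] [CharZero K]
    [AddCommGroup A] [Module K A]
    (br mul : A →ₗ[K] A →ₗ[K] A) (α β : A →ₗ[K] A) (k l : ℕ)
    (D : A →ₗ[K] A) : Prop :=
  (∀ x, D (α x) = α (D x)) ∧ (∀ x, D (β x) = β (D x)) ∧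
  (∀ x y, D (br x y)
    = br ((α ^ k) ((β ^ l) x)) (D y) + br (D x) ((α ^ k) ((β ^ l) y))) ∧
  (∀ x y, D (mul x y)
    = mul ((α ^ k) ((β ^ l) x)) (D y) + mul (D x) ((α ^ k) ((β ^ l) y)))

/-- The commutator of an `(α^k,β^l)`-derivation and an `(α^{k'},β^{l'})`-derivation
is an `(α^{k+k'},β^{l+l'})`-derivation. -/
theorem bhDerivation_comm {K A : Type*} [Field K] [CharZero K]
    [AddCommGroup A] [Module K A]
    (br mul : A →ₗ[K] A →ₗ[K] A) (α β : A →ₗ[K] A)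
    (h : IsBiHomPoisson br mul α β)
    (k l k' l' : ℕ) (D D' : A →ₗ[K] A)
    (hD : IsBHDerivation br mul α β k l D)
    (hD' : IsBHDerivation br mul α β k' l' D') :
    IsBHDerivation br mul α β (k + k') (l + l') (D ∘ₗ D' - D' ∘ₗ D) := by
  obtain ⟨hDa, hDb, hDbr, hDmul⟩ := hD
  obtain ⟨hDa', hDb', hDbr', hDmul'⟩ := hD'
  have hDan : ∀ n x, D ((α^n) x) = (α^n) (D x) := by
    intro n
    induction n with
    | zero => intro x; simp
    | succ n ih => intro x; rw [pow_succ]; simp only [Module.End.mul_apply, ih, hDa]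
  have hDbn : ∀ n x, D ((β^n) x) = (β^n) (D x) := by
    intro n
    induction n with
    | zero => intro x; simp
    | succ n ih => intro x; rw [pow_succ]; simp only [Module.End.mul_apply, ih, hDb]
  have hDan' : ∀ n x, D' ((α^n) x) = (α^n) (D' x) := by
    intro n
    induction n with
    | zero => intro x; simp
    | succ n ih => intro x; rw [pow_succ]; simp only [Module.End.mul_apply, ih, hDa']
  have hDbn' : ∀ n x, D' ((β^n) x) = (β^n) (D' x) := by
    intro n
    induction n with
    | zero => intro x; simp
    | succ n ih => intro x; rw [pow_succ]; simp only [Module.End.mul_apply, ih, hDb']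
  have hab : ∀ n x, β ((α^n) x) = (α^n) (β x) := by
    intro n
    induction n with
    | zero => intro x; simp
    | succ n ih => intro x; rw [pow_succ]; simp only [Module.End.mul_apply, ih, h.comm_maps]
  have habn : ∀ m n x, (β^m) ((α^n) x) = (α^n) ((β^m) x) := by
    intro m
    induction m with
    | zero => intro n x; simp
    | succ m ih => intro n x; rw [pow_succ]; simp only [Module.End.mul_apply, ih, hab]
  have haan : ∀ x, (α^k') ((α^k) x) = (α^k) ((α^k') x) := fun x => by
    rw [← Module.End.mul_apply, ← Module.End.mul_apply, pow_mul_comm]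
  have hbbn : ∀ x, (β^l') ((β^l) x) = (β^l) ((β^l') x) := fun x => by
    rw [← Module.End.mul_apply, ← Module.End.mul_apply, pow_mul_comm]
  refine ⟨?_, ?_, ?_, ?_⟩
  · intro x
    simp only [LinearMap.sub_apply, LinearMap.comp_apply, hDa, hDa', map_sub]
  · intro x
    simp only [LinearMap.sub_apply, LinearMap.comp_apply, hDb, hDb', map_sub]
  · intro x y
    simp only [LinearMap.sub_apply, LinearMap.comp_apply, hDbr', hDbr, map_add,
      LinearMap.add_apply, pow_add, Module.End.mul_apply, hDan, hDbn, hDan', hDbn', habn, haan, hbbn,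
      LinearMap.smul_apply, map_smul]
    simp only [map_sub, map_add, LinearMap.add_apply, LinearMap.sub_apply]
    abel
  · intro x y
    simp only [LinearMap.sub_apply, LinearMap.comp_apply, hDmul', hDmul, map_add,
      LinearMap.add_apply, pow_add, Module.End.mul_apply, hDan, hDbn, hDan', hDbn', habn, haan, hbbn,
      LinearMap.smul_apply, map_smul]
    simp only [map_sub, map_add, LinearMap.add_apply, LinearMap.sub_apply]
    abel
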